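/- The ε-smooth quantum Rényi entropy of order α ∈ [0,1) of a density matrix ρ, defined as the infimum of S_α(σ) over non-normalized density matrices σ with 0 ≤ σ ≤ ρ and tr(σ) ≥ 1 − ε, equals the ε-smooth classical Rényi entropy of order α of the eigenvalue distribution λ of ρ, defined as the infimum of H_α(μ) over μ with 0 ≤ μ_i ≤ λ_i for all i and ∑_i μ_i ≥ 1 − ε. -/

import Mathlib

open Matrix Real Finset
open scoped ComplexOrder

/-!
A classical candidate `0 ≤ μ ≤ λ` is realized by the matrix that is diagonal with entries `μ` in a
suitably ordered eigenbasis of `ρ`: it lies between `0` and `ρ` and its spectrum is `μ`. Conversely,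
if `0 ≤ σ ≤ ρ`, Weyl's monotonicity theorem says that the decreasingly ordered eigenvalues of `σ`
are dominated by those of `ρ`, so they form a classical candidate. Trace, rank and `∑ μᵢ ^ α` only
depend on the spectrum, so the two infima are taken over the same set of values.
-/

theorem exists_perm_antitone_comp {α : Type*} [LinearOrder α] {m : ℕ} (f : Fin m → α) :
    ∃ p : Equiv.Perm (Fin m), Antitone (f ∘ p) :=
  ⟨Tuple.sort (OrderDual.toDual ∘ f), (Tuple.monotone_sort (OrderDual.toDual ∘ f)).dual_right⟩

section WeightedSum

variable {n : Type*} [Fintype n] [LinearOrder n] {a w : n → ℝ}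

theorem mul_sum_le_sum_mul_of_antitone (ha : Antitone a) (hw : 0 ≤ w) {k : n}
    (hk : ∀ j, k < j → w j = 0) :
    a k * ∑ j, w j ≤ ∑ j, a j * w j := by
  rw [mul_sum]
  refine sum_le_sum fun j _ => ?_
  rcases le_or_gt j k with hjk | hjk
  · exact mul_le_mul_of_nonneg_right (ha hjk) (hw j)
  · simp [hk j hjk]

theorem sum_mul_le_mul_sum_of_antitone (ha : Antitone a) (hw : 0 ≤ w) {k : n}
    (hk : ∀ j, j < k → w j = 0) :
    ∑ j, a j * w j ≤ a k * ∑ j, w j := by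
  rw [mul_sum]
  refine sum_le_sum fun j _ => ?_
  rcases lt_or_ge j k with hjk | hjk
  · simp [hk j hjk]
  · exact mul_le_mul_of_nonneg_right (ha hjk) (hw j)

end WeightedSum

namespace Matrix

variable {n : Type*} [Fintype n]

theorem exists_ne_zero_mulVec_eq_zero_above_below {K : Type*} [Field K] [LinearOrder n]
    (P Q : Matrix n n K) (k : n) :
    ∃ x ≠ 0, (∀ j, k < j → (P *ᵥ x) j = 0) ∧ ∀ j, j < k → (Q *ᵥ x) j = 0 := by
  -- `x` satisfies `card n - 1` linear conditions: the stacked system has a zero row at `k`.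
  let M : Matrix n n K := of fun j i => if j < k then Q j i else if j = k then 0 else P j i
  obtain ⟨x, hx0, hx⟩ := exists_mulVec_eq_zero_iff (M := M) |>.mpr <|
    det_eq_zero_of_row_eq_zero k fun i => by simp [M]
  refine ⟨x, hx0, fun j hj => ?_, fun j hj => ?_⟩
  · simpa [M, mulVec, not_lt.mpr hj.le, hj.ne'] using congr_fun hx j
  · simpa [M, mulVec, hj] using congr_fun hx j

variable {𝕜 : Type*} [RCLike 𝕜]

theorem star_dotProduct_conj_diagonal_mulVec [DecidableEq n] (U : Matrix n n 𝕜) (a : n → ℝ)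
    (x : n → 𝕜) :
    star x ⬝ᵥ ((U * diagonal (RCLike.ofReal ∘ a) * star U) *ᵥ x) =
      ((∑ j, a j * ‖(star U *ᵥ x) j‖ ^ 2 : ℝ) : 𝕜) := by
  have hc : star x ᵥ* U = star (star U *ᵥ x) := by
    rw [star_mulVec, ← star_eq_conjTranspose, star_star]
  rw [← mulVec_mulVec, ← mulVec_mulVec, dotProduct_mulVec, hc]
  push_cast
  refine sum_congr rfl fun j _ => ?_
  simp only [Pi.star_apply, RCLike.star_def, mulVec_diagonal, Function.comp_apply]
  rw [mul_left_comm, RCLike.conj_mul]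

theorem sum_norm_sq_star_mulVec [DecidableEq n] {U : Matrix n n 𝕜} (hU : U ∈ unitaryGroup n 𝕜)
    (x : n → 𝕜) :
    ∑ j, ‖(star U *ᵥ x) j‖ ^ 2 = ∑ j, ‖x j‖ ^ 2 := by
  have hU1 := star_dotProduct_conj_diagonal_mulVec U 1 x
  have h11 := star_dotProduct_conj_diagonal_mulVec 1 1 x
  simp only [Function.comp_def, Pi.one_apply, RCLike.ofReal_one, one_mul, diagonal_one, mul_one,
    mem_unitaryGroup_iff.mp hU, star_one, one_mulVec] at hU1 h11
  exact_mod_cast hU1.symm.trans h11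

theorem le_of_posSemidef_sub_conj_diagonal [LinearOrder n] {U W : Matrix n n 𝕜}
    (hU : U ∈ unitaryGroup n 𝕜) (hW : W ∈ unitaryGroup n 𝕜) {a b : n → ℝ}
    (ha : Antitone a) (hb : Antitone b)
    (h : (W * diagonal (RCLike.ofReal ∘ b) * star W -
      U * diagonal (RCLike.ofReal ∘ a) * star U).PosSemidef) :
    a ≤ b := by
  intro k
  -- Test `h` on a nonzero vector in span {Uⱼ | j ≤ k} ∩ span {Wⱼ | k ≤ j}.
  obtain ⟨x, hx0, hUx, hWx⟩ := exists_ne_zero_mulVec_eq_zero_above_below (star U) (star W) k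
  have hx : 0 < ∑ j, ‖x j‖ ^ 2 := by
    obtain ⟨i, hi⟩ := Function.ne_iff.mp hx0
    exact sum_pos' (fun j _ => by positivity) ⟨i, mem_univ i, by positivity⟩
  have hquad : ∑ j, a j * ‖(star U *ᵥ x) j‖ ^ 2 ≤ ∑ j, b j * ‖(star W *ᵥ x) j‖ ^ 2 := by
    have := h.dotProduct_mulVec_nonneg x
    rwa [sub_mulVec, dotProduct_sub, star_dotProduct_conj_diagonal_mulVec,
      star_dotProduct_conj_diagonal_mulVec, sub_nonneg, RCLike.ofReal_le_ofReal] at this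
  have hlow := mul_sum_le_sum_mul_of_antitone ha (w := fun j => ‖(star U *ᵥ x) j‖ ^ 2)
    (fun j => by positivity) (k := k) fun j hj => by simp [hUx j hj]
  have hhigh := sum_mul_le_mul_sum_of_antitone hb (w := fun j => ‖(star W *ᵥ x) j‖ ^ 2)
    (fun j => by positivity) (k := k) fun j hj => by simp [hWx j hj]
  rw [sum_norm_sq_star_mulVec hU] at hlow
  rw [sum_norm_sq_star_mulVec hW] at hhigh
  exact le_of_mul_le_mul_right (hlow.trans (hquad.trans hhigh)) hx

variable [DecidableEq n]

theorem submatrix_id_mem_unitaryGroup {U : Matrix n n 𝕜} (hU : U ∈ unitaryGroup n 𝕜)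
    (p : Equiv.Perm n) : U.submatrix id p ∈ unitaryGroup n 𝕜 := by
  rw [mem_unitaryGroup_iff, star_eq_conjTranspose, conjTranspose_submatrix,
    submatrix_mul_equiv, ← star_eq_conjTranspose, mem_unitaryGroup_iff.mp hU, submatrix_id_id]

theorem conj_diagonal_eq_submatrix_conj_diagonal_comp (U : Matrix n n 𝕜) (d : n → 𝕜)
    (p : Equiv.Perm n) :
    U * diagonal d * star U = U.submatrix id p * diagonal (d ∘ p) * star (U.submatrix id p) := by
  rw [star_eq_conjTranspose, star_eq_conjTranspose, conjTranspose_submatrix,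
    ← submatrix_diagonal_equiv, submatrix_mul_equiv, submatrix_mul_equiv, submatrix_id_id]

theorem IsHermitian.exists_unitary_conj_diagonal_eigenvalues_comp {A : Matrix n n 𝕜}
    (hA : A.IsHermitian) (p : Equiv.Perm n) :
    ∃ U ∈ unitaryGroup n 𝕜, A = U * diagonal (RCLike.ofReal ∘ hA.eigenvalues ∘ p) * star U := by
  refine ⟨_, submatrix_id_mem_unitaryGroup hA.eigenvectorUnitary.2 p, ?_⟩
  rw [← Function.comp_assoc, ← conj_diagonal_eq_submatrix_conj_diagonal_comp]
  exact hA.spectral_theorem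

theorem IsHermitian.map_eigenvalues_eq_of_eq_conj_diagonal {A U : Matrix n n 𝕜}
    (hA : A.IsHermitian) (hU : U ∈ unitaryGroup n 𝕜) {d : n → ℝ}
    (h : A = U * diagonal (RCLike.ofReal ∘ d) * star U) :
    univ.val.map hA.eigenvalues = univ.val.map d := by
  have hchar : A.charpoly = (diagonal (RCLike.ofReal ∘ d)).charpoly := by
    rw [h, charpoly_mul_comm, ← mul_assoc, mem_unitaryGroup_iff'.mp hU, one_mul]
  have hroots := congrArg Polynomial.roots hchar
  rw [hA.roots_charpoly_eq_eigenvalues, charpoly_diagonal, Polynomial.roots_prod _ _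
    (prod_ne_zero_iff.mpr fun i _ => Polynomial.X_sub_C_ne_zero _)] at hroots
  simp only [Polynomial.roots_X_sub_C, Multiset.bind_singleton, ← Multiset.map_map] at hroots
  exact Multiset.map_injective RCLike.ofReal_injective hroots

theorem PosSemidef.rank_eq_card_filter_eigenvalues_pos {A : Matrix n n 𝕜} (hA : A.PosSemidef) :
    A.rank = #{i | 0 < hA.1.eigenvalues i} := by
  rw [hA.1.rank_eq_card_non_zero_eigs, Fintype.card_subtype]
  congr 1
  ext i
  simp [(hA.eigenvalues_nonneg i).lt_iff_ne', ne_comm]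

theorem IsHermitian.exists_posSemidef_sub_map_eigenvalues_eq {A : Matrix n n 𝕜}
    (hA : A.IsHermitian) (e : Equiv.Perm n) {μ : n → ℝ} (hμ0 : 0 ≤ μ)
    (hμA : μ ≤ hA.eigenvalues ∘ e) :
    ∃ (B : Matrix n n 𝕜) (hB : B.PosSemidef), (A - B).PosSemidef ∧
      univ.val.map hB.1.eigenvalues = univ.val.map μ := by
  obtain ⟨U, hU, hAU⟩ := hA.exists_unitary_conj_diagonal_eigenvalues_comp e
  have hB : (U * diagonal (RCLike.ofReal ∘ μ) * star U).PosSemidef := by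
    rw [star_eq_conjTranspose]
    exact (posSemidef_diagonal_iff.mpr fun i => by simpa using hμ0 i).mul_mul_conjTranspose_same U
  refine ⟨_, hB, ?_, hB.1.map_eigenvalues_eq_of_eq_conj_diagonal hU rfl⟩
  rw [hAU, ← sub_mul, ← mul_sub, diagonal_sub, star_eq_conjTranspose]
  exact (posSemidef_diagonal_iff.mpr fun i => by simpa using hμA i).mul_mul_conjTranspose_same U

theorem IsHermitian.exists_perm_eigenvalues_comp_le {m : ℕ} {A B : Matrix (Fin m) (Fin m) 𝕜}
    (hA : A.IsHermitian) (hB : B.IsHermitian) (hAB : (A - B).PosSemidef)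
    {e : Equiv.Perm (Fin m)} (he : Antitone (hA.eigenvalues ∘ e)) :
    ∃ p : Equiv.Perm (Fin m), hB.eigenvalues ∘ p ≤ hA.eigenvalues ∘ e := by
  obtain ⟨p, hp⟩ := exists_perm_antitone_comp hB.eigenvalues
  obtain ⟨U, hU, hAU⟩ := hA.exists_unitary_conj_diagonal_eigenvalues_comp e
  obtain ⟨W, hW, hBW⟩ := hB.exists_unitary_conj_diagonal_eigenvalues_comp p
  rw [hAU, hBW] at hAB
  exact ⟨p, le_of_posSemidef_sub_conj_diagonal hW hU hp he hAB⟩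

end Matrix

section Renyi

variable {n : Type*} [Fintype n]

theorem sum_comp_eq_of_map_univ_eq {μ ν : n → ℝ} (h : univ.val.map μ = univ.val.map ν)
    (f : ℝ → ℝ) : ∑ i, f (μ i) = ∑ i, f (ν i) := by
  have := congrArg (fun s => (s.map f).sum) h
  simp only [Multiset.map_map] at this
  exact this

theorem card_filter_pos_eq_of_map_univ_eq {μ ν : n → ℝ} (h : univ.val.map μ = univ.val.map ν) :
    #{i | 0 < μ i} = #{i | 0 < ν i} := by
  have := congrArg (Multiset.countP (0 < ·)) h
  simp only [Multiset.countP_map] at this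
  exact this

noncomputable def renyiEntropy (α : ℝ) (μ : n → ℝ) : ℝ :=
  if α = 0 then Real.log #{i | 0 < μ i} else (1 / (1 - α)) * Real.log (∑ i, μ i ^ α)

theorem renyiEntropy_congr (α : ℝ) {μ ν : n → ℝ} (h : univ.val.map μ = univ.val.map ν) :
    renyiEntropy α μ = renyiEntropy α ν := by
  rw [renyiEntropy, renyiEntropy, card_filter_pos_eq_of_map_univ_eq h,
    sum_comp_eq_of_map_univ_eq h (· ^ α)]

end Renyi

theorem smooth_quantum_renyi_eq_smooth_classical_general {m : ℕ}
    {ρ : Matrix (Fin m) (Fin m) ℂ} (hρps : ρ.PosSemidef)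
    (ε : ℝ) (α : ℝ)
    (lam : Fin m → ℝ) (hlam : Antitone lam)
    (hlamEig : ∃ e : Equiv.Perm (Fin m), lam = hρps.1.eigenvalues ∘ e) :
    sInf {x : ℝ | ∃ (σ : Matrix (Fin m) (Fin m) ℂ) (hσps : σ.PosSemidef),
        (ρ - σ).PosSemidef ∧ 1 - ε ≤ σ.trace.re ∧
        x = if α = 0 then Real.log (σ.rank)
            else (1 / (1 - α)) * Real.log (∑ i, hσps.1.eigenvalues i ^ α)} =
    sInf {x : ℝ | ∃ mu : Fin m → ℝ, (∀ i, 0 ≤ mu i ∧ mu i ≤ lam i) ∧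
        1 - ε ≤ ∑ i, mu i ∧
        x = if α = 0 then Real.log ((Finset.univ.filter fun i => 0 < mu i).card)
            else (1 / (1 - α)) * Real.log (∑ i, mu i ^ α)} := by
  obtain ⟨e, rfl⟩ := hlamEig
  have htrace {σ : Matrix (Fin m) (Fin m) ℂ} (hσ : σ.IsHermitian) :
      σ.trace.re = ∑ i, hσ.eigenvalues i := by
    simp [hσ.trace_eq_sum_eigenvalues]
  congr 1
  ext x
  constructor
  · rintro ⟨σ, hσ, hρσ, hσtr, rfl⟩
    obtain ⟨p, hp⟩ := hρps.1.exists_perm_eigenvalues_comp_le hσ.1 hρσ hlam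
    have hmap : univ.val.map (hσ.1.eigenvalues ∘ p) = univ.val.map hσ.1.eigenvalues := by
      rw [← Multiset.map_map, Multiset.map_univ_val_equiv]
    refine ⟨_, fun i => ⟨hσ.eigenvalues_nonneg _, hp i⟩, ?_, ?_⟩
    · rwa [Equiv.sum_comp p, ← htrace]
    · rw [hσ.rank_eq_card_filter_eigenvalues_pos]
      exact renyiEntropy_congr α hmap.symm
  · rintro ⟨μ, hμ, hμtr, rfl⟩
    obtain ⟨σ, hσ, hρσ, hmap⟩ :=
      hρps.1.exists_posSemidef_sub_map_eigenvalues_eq e (fun i => (hμ i).1) (fun i => (hμ i).2)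
    refine ⟨σ, hσ, hρσ, ?_, ?_⟩
    · rwa [htrace hσ.1, sum_eq_multiset_sum, hmap, ← sum_eq_multiset_sum]
    · rw [hσ.rank_eq_card_filter_eigenvalues_pos]
      exact renyiEntropy_congr α hmap.symm

/-- The ε-smooth quantum Rényi entropy of order `α ∈ [0,1)` of a density matrix
equals the ε-smooth classical Rényi entropy of its eigenvalue distribution. -/
theorem smooth_quantum_renyi_eq_smooth_classical {m : ℕ}
    {ρ : Matrix (Fin m) (Fin m) ℂ} (hρps : ρ.PosSemidef) (htr : ρ.trace = 1)
    (ε : ℝ) (hε0 : 0 ≤ ε) (hε1 : ε < 1)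
    (α : ℝ) (hα0 : 0 ≤ α) (hα1 : α < 1)
    (lam : Fin m → ℝ) (hlam : Antitone lam)
    (hlamEig : ∃ e : Equiv.Perm (Fin m), lam = hρps.1.eigenvalues ∘ e) :
    sInf {x : ℝ | ∃ (σ : Matrix (Fin m) (Fin m) ℂ) (hσps : σ.PosSemidef),
        (ρ - σ).PosSemidef ∧ 1 - ε ≤ σ.trace.re ∧
        x = if α = 0 then Real.log (σ.rank)
            else (1 / (1 - α)) * Real.log (∑ i, hσps.1.eigenvalues i ^ α)} =
    sInf {x : ℝ | ∃ mu : Fin m → ℝ, (∀ i, 0 ≤ mu i ∧ mu i ≤ lam i) ∧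
        1 - ε ≤ ∑ i, mu i ∧
        x = if α = 0 then Real.log ((Finset.univ.filter fun i => 0 < mu i).card)
            else (1 / (1 - α)) * Real.log (∑ i, mu i ^ α)} :=
  smooth_quantum_renyi_eq_smooth_classical_general hρps ε α lam hlam hlamEig
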